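/- arXiv:2207.03619 — 2 statements merged into one kernel-verified Lean document; each statement's English description precedes it below -/
import Mathlib

section
/- Suppose H = (H₁; H₂) is a nontrivial BSHM(n,ℓ,a,b) with respect to H₁ (so 1 < ℓ < n−1), where b ≠ a and b ≠ −a. Then k_a(i) = (ℓ(n−ℓ) − b²(n−1))/(a² − b²) for every column index i (in particular k_a(i) is independent of i), and exactly one of the following holds: H₁𝟙 = 0 (H has Type 1) or H₂𝟙 = 0 (H has Type 2). -/
/-!
Let `M = H₁ᵀ H₁` be the Gram matrix of the columns of `H₁`. Since the rows of a Hadamard matrix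
are orthogonal, `H₁ H₁ᵀ = n I` and hence `M² = n M`. The diagonal of `M²` gives
`∑ⱼ M i j ² = n ℓ`, i.e. `ℓ² + k_a(i) a² + (n - 1 - k_a(i)) b² = n ℓ`, which determines `k_a(i)`.
Consequently every row sum `ℓ + k_a a + (n - 1 - k_a) b` of `M` is the same number `s`, and
`M² 𝟙 = n M 𝟙` forces `s ∈ {0, n}`. Finally `‖H₁ 𝟙‖² = 𝟙ᵀ M 𝟙 = n s` while
`‖H₁ 𝟙‖² + ‖H₂ 𝟙‖² = ‖H 𝟙‖² = n²`, so exactly one of `H₁ 𝟙`, `H₂ 𝟙` vanishes.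
-/

open Matrix Finset

/-- A Hadamard matrix of order `n`: entries in `{1,-1}` and `Hᵀ * H = n • 1`. -/
def IsHadamard {n : ℕ} (H : Matrix (Fin n) (Fin n) ℤ) : Prop :=
  (∀ i j, H i j = 1 ∨ H i j = -1) ∧ Hᵀ * H = (n : ℤ) • 1

/-- Dot product of columns `j` and `k` of the submatrix of `H` formed by the rows in `R`. -/
def colDot {n : ℕ} (H : Matrix (Fin n) (Fin n) ℤ) (R : Finset (Fin n)) (j k : Fin n) : ℤ :=
  ∑ i ∈ R, H i j * H i k

/-- `H` is a balanced splittable Hadamard matrix with respect to the submatrix formed by the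
rows in `R`, with values `a, b`. -/
def IsBSHM {n : ℕ} (H : Matrix (Fin n) (Fin n) ℤ) (R : Finset (Fin n)) (a b : ℤ) : Prop :=
  _root_.IsHadamard H ∧ ∀ j k : Fin n, j ≠ k → colDot H R j k = a ∨ colDot H R j k = b

/-- `kA H R a i` is the number of columns `j ≠ i` whose dot product with column `i`
(in the submatrix with rows `R`) equals `a`. -/
def kA {n : ℕ} (H : Matrix (Fin n) (Fin n) ℤ) (R : Finset (Fin n)) (a : ℤ) (i : Fin n) : ℕ :=
  (univ.filter fun j => j ≠ i ∧ colDot H R i j = a).card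

theorem Fintype.sum_comp_of_forall_ne_eq_or_eq {ι α β : Type*} [Fintype ι] [DecidableEq ι]
    [DecidableEq α] [CommRing β] {f : ι → α} {i : ι} {a b : α}
    (hf : ∀ j ≠ i, f j = a ∨ f j = b) (F : α → β) :
    ∑ j, F (f j) = F (f i) + ((Fintype.card ι : β) - 1) * F b
      + #{j | j ≠ i ∧ f j = a} * (F a - F b) := by
  have hterm : ∀ j ∈ univ.erase i, F (f j) = F b + if f j = a then F a - F b else 0 := by
    intro j hj
    rcases hf j (ne_of_mem_erase hj) with h | h <;> by_cases ha : f j = a <;> simp_all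
  rw [← add_sum_erase _ _ (mem_univ i), Finset.sum_congr rfl hterm, sum_add_distrib,
    Finset.sum_const, card_erase_of_mem (mem_univ i), ← sum_filter, Finset.sum_const,
    ← filter_ne', filter_filter, nsmul_eq_mul, nsmul_eq_mul, card_univ,
    Nat.cast_pred (card_pos_iff.mpr ⟨i⟩)]
  ring

namespace Matrix

-- Over a field this is `mul_eq_one_comm` applied to `c⁻¹ • Hᵀ`; pass to the fraction field.
theorem mul_transpose_eq_smul_one_of_transpose_mul {m R : Type*} [Fintype m] [DecidableEq m]
    [CommRing R] [IsDomain R] {H : Matrix m m R} {c : R} (hc : c ≠ 0)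
    (h : Hᵀ * H = c • 1) : H * Hᵀ = c • 1 := by
  let φ := algebraMap R (FractionRing R)
  have hφ : Function.Injective φ := IsFractionRing.injective R (FractionRing R)
  have hφc : φ c ≠ 0 := (map_ne_zero_iff φ hφ).mpr hc
  have hmap : (c • 1 : Matrix m m R).map φ = φ c • 1 := by
    ext i j
    simp [one_apply, apply_ite φ]
  have hinv : ((φ c)⁻¹ • (H.map φ)ᵀ) * H.map φ = 1 := by
    rw [Matrix.smul_mul, ← transpose_map, ← Matrix.map_mul, h, hmap, smul_smul,
      inv_mul_cancel₀ hφc, one_smul]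
  apply Matrix.map_injective hφ
  change (H * Hᵀ).map φ = (c • 1 : Matrix m m R).map φ
  rw [hmap, Matrix.map_mul, transpose_map, ← inv_smul_eq_iff₀ hφc, ← Matrix.mul_smul,
    mul_eq_one_comm.mp hinv]

theorem gram_mul_gram {m k R : Type*} [Fintype m] [Fintype k] [DecidableEq m] [CommRing R]
    {A : Matrix m k R} {c : R} (h : A * Aᵀ = c • 1) : Aᵀ * A * (Aᵀ * A) = c • (Aᵀ * A) := by
  rw [Matrix.mul_assoc, ← Matrix.mul_assoc A, h, Matrix.smul_mul, Matrix.one_mul,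
    Matrix.mul_smul]

section MulSelfEqSmul

variable {k R : Type*} [Fintype k] [CommRing R] {G : Matrix k k R} {c : R}

theorem sum_apply_mul_self_of_mul_self_eq_smul (hGt : Gᵀ = G) (hG : G * G = c • G) (i : k) :
    ∑ j, G i j * G i j = c * G i i := by
  have hsymm (j : k) : G j i = G i j := by rw [← transpose_apply G, hGt]
  simpa only [mul_apply, hsymm, smul_apply, smul_eq_mul] using congr_fun₂ hG i i

theorem mul_self_eq_of_mul_self_eq_smul (hG : G * G = c • G) [Nonempty k] {s : R}
    (hs : ∀ i, ∑ j, G i j = s) : s * s = c * s := by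
  obtain ⟨i⟩ := ‹Nonempty k›
  have h := congr_arg (fun M => ∑ j, M i j) hG
  simp only [mul_apply, smul_apply, smul_eq_mul] at h
  rw [sum_comm] at h
  simpa only [← mul_sum, hs, ← sum_mul] using h

end MulSelfEqSmul

end Matrix

variable {n : ℕ} {H : Matrix (Fin n) (Fin n) ℤ} {R : Finset (Fin n)} {a b : ℤ}

theorem of_colDot_eq_transpose_mul (H : Matrix (Fin n) (Fin n) ℤ) (R : Finset (Fin n)) :
    of (colDot H R) =
      (H.submatrix ((↑) : R → Fin n) id)ᵀ * H.submatrix ((↑) : R → Fin n) id := by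
  ext j k
  rw [of_apply, colDot, mul_apply, ← sum_coe_sort]
  rfl

theorem sum_rowSum_mul_self_eq_sum_sum_colDot (H : Matrix (Fin n) (Fin n) ℤ)
    (R : Finset (Fin n)) :
    ∑ r ∈ R, (∑ j, H r j) * (∑ j, H r j) = ∑ i, ∑ j, colDot H R i j := by
  simp only [colDot, sum_mul_sum]
  rw [sum_comm]
  exact sum_congr rfl fun _ _ => sum_comm

namespace IsHadamard

theorem mul_transpose (hH : _root_.IsHadamard H) : H * Hᵀ = (n : ℤ) • 1 := by
  rcases Nat.eq_zero_or_pos n with rfl | hn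
  · exact Subsingleton.elim _ _
  · exact mul_transpose_eq_smul_one_of_transpose_mul (by positivity) hH.2

theorem colDot_self (hH : _root_.IsHadamard H) (i : Fin n) : colDot H R i i = R.card := by
  have hsq (r : Fin n) : H r i * H r i = 1 := by rcases hH.1 r i with h | h <;> simp [h]
  simp [colDot, hsq]

theorem colDot_univ (hH : _root_.IsHadamard H) (i j : Fin n) :
    colDot H univ i j = if i = j then (n : ℤ) else 0 := by
  simpa [colDot, mul_apply, one_apply] using congr_fun₂ hH.2 i j

theorem of_colDot_mul_self (hH : _root_.IsHadamard H) :
    of (colDot H R) * of (colDot H R) = (n : ℤ) • of (colDot H R) := by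
  refine of_colDot_eq_transpose_mul H R ▸ gram_mul_gram ?_
  rw [transpose_submatrix, ← submatrix_mul _ _ _ _ _ Function.bijective_id, hH.mul_transpose]
  ext i j
  simp only [submatrix_apply, Matrix.smul_apply, one_apply, Subtype.val_inj]

theorem sum_colDot_mul_self (hH : _root_.IsHadamard H) (i : Fin n) :
    ∑ j, colDot H R i j * colDot H R i j = n * R.card := by
  have hsymm : (of (colDot H R))ᵀ = of (colDot H R) := by
    rw [of_colDot_eq_transpose_mul, transpose_mul, transpose_transpose]
  simpa [hH.colDot_self] using
    sum_apply_mul_self_of_mul_self_eq_smul hsymm hH.of_colDot_mul_self i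

theorem xor_forall_rowSum_eq_zero (hH : _root_.IsHadamard H) (hn : 0 < n) {s : ℤ}
    (hs : ∀ i, ∑ j, colDot H R i j = s) :
    Xor (∀ i ∈ R, ∑ j, H i j = 0) (∀ i ∈ Rᶜ, ∑ j, H i j = 0) := by
  have : Nonempty (Fin n) := ⟨⟨0, hn⟩⟩
  have hss : s * s = n * s := mul_self_eq_of_mul_self_eq_smul hH.of_colDot_mul_self hs
  have hR : ∑ r ∈ R, (∑ j, H r j) * (∑ j, H r j) = n * s := by
    simp [sum_rowSum_mul_self_eq_sum_sum_colDot, hs]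
  have htotal : ∑ r ∈ R, (∑ j, H r j) * (∑ j, H r j)
      + ∑ r ∈ Rᶜ, (∑ j, H r j) * (∑ j, H r j) = n * n := by
    rw [sum_add_sum_compl, sum_rowSum_mul_self_eq_sum_sum_colDot]
    simp [hH.colDot_univ]
  have hnn : (n : ℤ) * n ≠ 0 := by positivity
  rw [← sum_mul_self_eq_zero_iff, ← sum_mul_self_eq_zero_iff]
  rcases mul_eq_zero.mp (show s * (s - n) = 0 by linear_combination hss) with h | h
  · exact Or.inl ⟨by simp [hR, h], by rw [hR, h] at htotal; simpa [← htotal] using hnn⟩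
  · exact Or.inr ⟨by linear_combination htotal - hR - (n : ℤ) * h,
      by simp [hR, sub_eq_zero.mp h, hnn]⟩

end IsHadamard

namespace IsBSHM

theorem sum_comp_colDot (hB : IsBSHM H R a b) (i : Fin n) (F : ℤ → ℤ) :
    ∑ j, F (colDot H R i j) = F R.card + ((n : ℤ) - 1) * F b + kA H R a i * (F a - F b) := by
  have h := Fintype.sum_comp_of_forall_ne_eq_or_eq (fun j hj => hB.2 i j hj.symm) F
  rwa [hB.1.colDot_self, Fintype.card_fin] at h

theorem kA_mul (hB : IsBSHM H R a b) (i : Fin n) :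
    (kA H R a i : ℤ) * (a ^ 2 - b ^ 2) = R.card * (n - R.card) - b ^ 2 * (n - 1) := by
  have h := hB.sum_comp_colDot i fun x => x * x
  rw [hB.1.sum_colDot_mul_self] at h
  linear_combination -h

theorem kA_eq_kA (hB : IsBSHM H R a b) (hab : a ^ 2 ≠ b ^ 2) (i j : Fin n) :
    kA H R a i = kA H R a j := by
  exact_mod_cast mul_right_cancel₀ (sub_ne_zero.mpr hab) ((hB.kA_mul i).trans (hB.kA_mul j).symm)

end IsBSHM

theorem stmt6_general {n ℓ : ℕ} (a b : ℤ) (H : Matrix (Fin n) (Fin n) ℤ)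
    (R : Finset (Fin n)) (hRcard : R.card = ℓ) (h2 : ℓ < n - 1)
    (hba : b ≠ a) (hbna : b ≠ -a)
    (hbshm : IsBSHM H R a b) :
    (∀ i : Fin n, (kA H R a i : ℚ) =
      ((ℓ : ℚ) * ((n : ℚ) - (ℓ : ℚ)) - (b : ℚ) ^ 2 * ((n : ℚ) - 1)) /
        ((a : ℚ) ^ 2 - (b : ℚ) ^ 2)) ∧
    Xor' (∀ i ∈ R, ∑ j, H i j = 0) (∀ i ∈ Rᶜ, ∑ j, H i j = 0) := by
  have hab : a ^ 2 ≠ b ^ 2 := fun h =>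
    (sq_eq_sq_iff_eq_or_eq_neg.mp h).elim (fun h => hba h.symm) fun h => hbna (by simp [h])
  have hn : 0 < n := by omega
  subst hRcard
  refine ⟨fun i => ?_, ?_⟩
  · rw [eq_div_iff (by exact_mod_cast sub_ne_zero.mpr hab)]
    exact_mod_cast hbshm.kA_mul i
  · refine hbshm.1.xor_forall_rowSum_eq_zero hn
      (s := R.card + ((n : ℤ) - 1) * b + kA H R a ⟨0, hn⟩ * (a - b)) fun i => ?_
    simpa [hbshm.kA_eq_kA hab i ⟨0, hn⟩] using hbshm.sum_comp_colDot i id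

theorem stmt6 {n ℓ : ℕ} (a b : ℤ) (H : Matrix (Fin n) (Fin n) ℤ)
    (R : Finset (Fin n)) (hRcard : R.card = ℓ) (h1 : 1 < ℓ) (h2 : ℓ < n - 1)
    (hba : b ≠ a) (hbna : b ≠ -a)
    (hbshm : IsBSHM H R a b) :
    (∀ i : Fin n, (kA H R a i : ℚ) =
      ((ℓ : ℚ) * ((n : ℚ) - (ℓ : ℚ)) - (b : ℚ) ^ 2 * ((n : ℚ) - 1)) /
        ((a : ℚ) ^ 2 - (b : ℚ) ^ 2)) ∧
    Xor' (∀ i ∈ R, ∑ j, H i j = 0) (∀ i ∈ Rᶜ, ∑ j, H i j = 0) :=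
  stmt6_general a b H R hRcard h2 hba hbna hbshm
end

section
/- Suppose H = (H₁; H₂) is a nontrivial BSHM(n,ℓ,a,b) with respect to H₁ (so 1 < ℓ < n−1), where b ≠ a, b ≠ −a, the values a and b are both attained, and H₁𝟙 = 0 (H has Type 1). Then: (H₂𝟙)·(H₂𝟙) = n²; n(ℓ + ab) = (ℓ−a)(ℓ−b); ab ≤ 0; b−a divides each of ℓ−b and n; 2(b−a) divides n(b+1); (b−a)² divides nb(b+1); k_a(i) = (ℓ−b)/(b−a) + nb/(b−a) for every i; and the associated graph of H with respect to H₁ is strongly regular with parameters (v,k,λ,μ) = (n, (ℓ−b+nb)/(b−a), nb(b+1)/(b−a)² + (2(ℓ−b)−n)/(b−a), nb(b+1)/(b−a)²). -/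
open Matrix Finset

/-- The associated graph (vertices `Fin n`, with `i ~ j` iff `i ≠ j` and columns `i`, `j` of the
submatrix with rows `R` have dot product `a`) is strongly regular with parameters
`(v, k, lam, mu)`. -/
def AssociatedGraphIsSRG {n : ℕ} (H : Matrix (Fin n) (Fin n) ℤ) (R : Finset (Fin n)) (a : ℤ)
    (v k lam mu : ℕ) : Prop :=
  n = v ∧
  (∀ i : Fin n, (univ.filter fun j => i ≠ j ∧ colDot H R i j = a).card = k) ∧
  (∀ i j : Fin n, i ≠ j → colDot H R i j = a →
    (univ.filter fun x =>
      (i ≠ x ∧ colDot H R i x = a) ∧ (j ≠ x ∧ colDot H R j x = a)).card = lam) ∧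
  (∀ i j : Fin n, i ≠ j → colDot H R i j ≠ a →
    (univ.filter fun x =>
      (i ≠ x ∧ colDot H R i x = a) ∧ (j ≠ x ∧ colDot H R j x = a)).card = mu)

/-!
Let `G = H₁ᵀH₁` be the Gram matrix of the columns of `H₁` and `A` the adjacency matrix of the
associated graph, so that `G = ℓI + (a - b)A + b(J - I)`. Since `HHᵀ = nI`, the rows of `H₁`
are pairwise orthogonal of squared norm `n`, which gives `G² = nG` and `G h = n h` for every
row `h` of `H₁`; Type 1 adds `G𝟙 = 0`. Reading these identities through the decomposition of
`G` yields the degree `(b - a)k = ℓ + (n - 1)b`, the relation `n(ℓ + ab) = (ℓ - a)(ℓ - b)`, the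
numbers of common neighbours `(a - b)²λ` and `(a - b)²μ`, and `(b - a)(A h) = (ℓ - b - n)h`.
The latter makes `ℓ - b - n` a multiple of `b - a`, and because `h` is a `±1` vector,
`(A h)ⱼ hⱼ ≡ k (mod 2)`; all divisibilities follow from these integrality relations.
-/

theorem Matrix.mul_eq_smul_one_comm {ι R : Type*} [Fintype ι] [DecidableEq ι] [CommRing R]
    [IsDomain R] {A B : Matrix ι ι R} {c : R} (hc : c ^ Fintype.card ι ≠ 0)
    (h : B * A = c • 1) : A * B = c • 1 := by
  have hdet : A.det ≠ 0 := by
    intro h0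
    have hdet := congrArg det h
    rw [det_mul, h0, mul_zero, det_smul, det_one, mul_one] at hdet
    exact hc hdet.symm
  have hzero : (A * B - c • 1) * A = 0 := by
    rw [Matrix.sub_mul, Matrix.mul_assoc, h, Matrix.mul_smul, Matrix.smul_mul, Matrix.mul_one,
      Matrix.one_mul, sub_self]
  have : A.det • (A * B - c • 1) = 0 := by
    rw [← Matrix.mul_one (A * B - c • 1), ← Matrix.mul_smul, ← mul_adjugate, ← Matrix.mul_assoc,
      hzero, Matrix.zero_mul]
  exact sub_eq_zero.mp ((smul_eq_zero.mp this).resolve_left hdet)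

section Hadamard

variable {n : ℕ} {H : Matrix (Fin n) (Fin n) ℤ}

theorem sum_sq_sum_row_eq (hH : Hᵀ * H = (n : ℤ) • 1) :
    ∑ i, (∑ j, H i j) ^ 2 = (n : ℤ) ^ 2 := by
  calc ∑ i, (∑ j, H i j) ^ 2 = ∑ j, ∑ k, (Hᵀ * H) j k := by
        simp only [sq, Finset.sum_mul_sum, mul_apply, transpose_apply]
        rw [Finset.sum_comm]
        exact Finset.sum_congr rfl fun j _ => Finset.sum_comm
    _ = (n : ℤ) ^ 2 := by simp [hH, one_apply, sq]

theorem sum_compl_sq_sum_row_eq (hH : Hᵀ * H = (n : ℤ) • 1) {R : Finset (Fin n)}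
    (hType1 : ∀ i ∈ R, ∑ j, H i j = 0) : ∑ i ∈ Rᶜ, (∑ j, H i j) ^ 2 = (n : ℤ) ^ 2 := by
  have hR : ∑ i ∈ R, (∑ j, H i j) ^ 2 = 0 :=
    Finset.sum_eq_zero fun i hi => by rw [hType1 i hi, sq, mul_zero]
  rw [← sum_sq_sum_row_eq hH, ← Finset.sum_add_sum_compl R, hR, zero_add]

theorem sum_mul_row_eq_of_mul_transpose (hH : H * Hᵀ = (n : ℤ) • 1) (r s : Fin n) :
    ∑ x, H r x * H s x = if r = s then (n : ℤ) else 0 := by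
  simpa [mul_apply, one_apply] using congrFun₂ hH r s

variable (R : Finset (Fin n))

theorem colDot_comm (j k : Fin n) : colDot H R j k = colDot H R k j := by
  simp only [colDot, mul_comm]

theorem colDot_self (hent : ∀ i j, H i j = 1 ∨ H i j = -1) (j : Fin n) :
    colDot H R j j = R.card := by
  rw [colDot, Finset.card_eq_sum_ones, Nat.cast_sum]
  refine Finset.sum_congr rfl fun i _ => ?_
  rcases hent i j with h | h <;> simp [h]

theorem sum_colDot_eq_zero (hType1 : ∀ i ∈ R, ∑ j, H i j = 0) (j : Fin n) :
    ∑ x, colDot H R j x = 0 := by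
  simp only [colDot]
  rw [Finset.sum_comm]
  exact Finset.sum_eq_zero fun i hi => by rw [← Finset.mul_sum, hType1 i hi, mul_zero]

theorem sum_colDot_mul_row (hH : H * Hᵀ = (n : ℤ) • 1) (j s : Fin n) :
    ∑ x, colDot H R j x * H s x = if s ∈ R then n * H s j else 0 := by
  simp only [colDot, Finset.sum_mul, mul_assoc]
  rw [Finset.sum_comm]
  simp only [← Finset.mul_sum, sum_mul_row_eq_of_mul_transpose hH, mul_ite, mul_zero,
    Finset.sum_ite_eq']
  split_ifs <;> ring

theorem sum_colDot_mul_colDot (hH : H * Hᵀ = (n : ℤ) • 1) (i j : Fin n) :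
    ∑ x, colDot H R i x * colDot H R j x = n * colDot H R i j := by
  calc ∑ x, colDot H R i x * colDot H R j x
      = ∑ x, ∑ s ∈ R, H s i * (colDot H R j x * H s x) :=
        Finset.sum_congr rfl fun x _ => by
          rw [colDot, Finset.sum_mul]
          exact Finset.sum_congr rfl fun s _ => by ring
    _ = ∑ s ∈ R, H s i * ∑ x, colDot H R j x * H s x := by
        rw [Finset.sum_comm]
        simp only [Finset.mul_sum]
    _ = n * colDot H R i j := by
        rw [colDot, Finset.mul_sum]
        refine Finset.sum_congr rfl fun s hs => ?_
        rw [sum_colDot_mul_row R hH, if_pos hs]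
        ring

end Hadamard

section TwoValued

variable {n : ℕ} {G : Fin n → Fin n → ℤ} {a ℓ b : ℤ}

variable (G a) in
def neighbors (i : Fin n) : Finset (Fin n) := univ.filter fun j => i ≠ j ∧ G i j = a

-- The entrywise form of `G = ℓI + (a - b)A + b(J - I)`.
theorem sub_mul_ite_mem_neighbors (hdiag : ∀ i, G i i = ℓ)
    (hoff : ∀ i j, i ≠ j → G i j = a ∨ G i j = b) (i x : Fin n) :
    (a - b) * (if x ∈ neighbors G a i then 1 else 0) =
      G i x - b - (ℓ - b) * if i = x then 1 else 0 := by
  by_cases hix : i = x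
  · subst hix
    simp [neighbors, hdiag]
  · rcases hoff i x hix with h | h <;> by_cases hab : b = a <;> simp [neighbors, hix, h, hab]

theorem sub_mul_sum_neighbors (hdiag : ∀ i, G i i = ℓ)
    (hoff : ∀ i j, i ≠ j → G i j = a ∨ G i j = b) (i : Fin n) (v : Fin n → ℤ) :
    (a - b) * ∑ x ∈ neighbors G a i, v x =
      ∑ x, G i x * v x - b * ∑ x, v x - (ℓ - b) * v i := by
  calc (a - b) * ∑ x ∈ neighbors G a i, v x
      = ∑ x, (a - b) * (if x ∈ neighbors G a i then 1 else 0) * v x := by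
        simp [Finset.mul_sum, ite_mul]
    _ = ∑ x, (G i x - b - (ℓ - b) * if i = x then 1 else 0) * v x := by
        simp only [sub_mul_ite_mem_neighbors hdiag hoff]
    _ = ∑ x, G i x * v x - b * ∑ x, v x - (ℓ - b) * v i := by
        simp [sub_mul, Finset.sum_sub_distrib, Finset.mul_sum]

theorem sub_mul_card_neighbors (hdiag : ∀ i, G i i = ℓ)
    (hoff : ∀ i j, i ≠ j → G i j = a ∨ G i j = b) (hsum : ∀ i, ∑ x, G i x = 0) (i : Fin n) :
    (b - a) * #(neighbors G a i) = ℓ + (n - 1) * b := by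
  have h := sub_mul_sum_neighbors hdiag hoff i fun _ => 1
  simp only [Finset.sum_const, nsmul_eq_mul, mul_one, hsum, Finset.card_univ,
    Fintype.card_fin] at h
  linear_combination -h

theorem card_neighbors_eq (hab : a ≠ b) (hdiag : ∀ i, G i i = ℓ)
    (hoff : ∀ i j, i ≠ j → G i j = a ∨ G i j = b) (hsum : ∀ i, ∑ x, G i x = 0) (i j : Fin n) :
    #(neighbors G a i) = #(neighbors G a j) := by
  have h := (sub_mul_card_neighbors hdiag hoff hsum i).trans
    (sub_mul_card_neighbors hdiag hoff hsum j).symm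
  exact_mod_cast mul_left_cancel₀ (sub_ne_zero.2 hab.symm) h

theorem mul_add_mul_eq_sub_mul_sub (hdiag : ∀ i, G i i = ℓ)
    (hoff : ∀ i j, i ≠ j → G i j = a ∨ G i j = b) (hsum : ∀ i, ∑ x, G i x = 0)
    (hsq : ∀ i j, ∑ x, G i x * G j x = n * G i j) (i : Fin n) :
    n * (ℓ + a * b) = (ℓ - a) * (ℓ - b) := by
  have h := sub_mul_sum_neighbors hdiag hoff i fun x => G i x - a
  have hzero : ∑ x ∈ neighbors G a i, (G i x - a) = 0 :=
    Finset.sum_eq_zero fun x hx => by simp_all [neighbors]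
  simp only [hzero, mul_sub, Finset.sum_sub_distrib, ← Finset.sum_mul, hsq, hsum, hdiag,
    Finset.sum_const, Finset.card_univ, Fintype.card_fin, nsmul_eq_mul] at h
  linear_combination -h

theorem sq_mul_card_inter_neighbors (hdiag : ∀ i, G i i = ℓ)
    (hoff : ∀ i j, i ≠ j → G i j = a ∨ G i j = b) (hsum : ∀ i, ∑ x, G i x = 0)
    (hsq : ∀ i j, ∑ x, G i x * G j x = n * G i j) (hsymm : ∀ i j, G i j = G j i)
    {i j : Fin n} (hij : i ≠ j) :
    (a - b) ^ 2 * #(neighbors G a i ∩ neighbors G a j)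
      = n * G i j + n * b ^ 2 - 2 * (ℓ - b) * (G i j - b) := by
  have h := sub_mul_sum_neighbors hdiag hoff i
    fun x => G j x - b - (ℓ - b) * if j = x then 1 else 0
  have hL : ∑ x ∈ neighbors G a i, (G j x - b - (ℓ - b) * if j = x then 1 else 0)
      = (a - b) * #(neighbors G a i ∩ neighbors G a j) := by
    simp only [← sub_mul_ite_mem_neighbors hdiag hoff j, ← Finset.mul_sum, Finset.sum_boole,
      Finset.filter_mem_eq_inter]
  rw [hL] at h
  simp only [mul_sub, mul_ite, mul_one, mul_zero, Finset.sum_sub_distrib, ← Finset.sum_mul,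
    Finset.sum_ite_eq, Finset.mem_univ, if_true, if_neg hij.symm, hsq, hsum,
    Finset.sum_const, Finset.card_univ, Fintype.card_fin, nsmul_eq_mul, hsymm j i] at h
  linear_combination h

theorem card_inter_neighbors_eq (hab : a ≠ b) (hdiag : ∀ i, G i i = ℓ)
    (hoff : ∀ i j, i ≠ j → G i j = a ∨ G i j = b) (hsum : ∀ i, ∑ x, G i x = 0)
    (hsq : ∀ i j, ∑ x, G i x * G j x = n * G i j) (hsymm : ∀ i j, G i j = G j i)
    {i j i' j' : Fin n} (hij : i ≠ j) (hij' : i' ≠ j') (h : G i j = G i' j') :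
    #(neighbors G a i ∩ neighbors G a j) = #(neighbors G a i' ∩ neighbors G a j') := by
  have key := (sq_mul_card_inter_neighbors hdiag hoff hsum hsq hsymm hij).trans
    (h ▸ (sq_mul_card_inter_neighbors hdiag hoff hsum hsq hsymm hij').symm)
  exact_mod_cast mul_left_cancel₀ (pow_ne_zero 2 (sub_ne_zero.2 hab)) key

theorem sub_mul_sum_neighbors_of_eigenvector (hdiag : ∀ i, G i i = ℓ)
    (hoff : ∀ i j, i ≠ j → G i j = a ∨ G i j = b) {v : Fin n → ℤ}
    (hv : ∀ j, ∑ x, G j x * v x = n * v j) (hv0 : ∑ x, v x = 0) (j : Fin n) :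
    (b - a) * ∑ x ∈ neighbors G a j, v x = (ℓ - b - n) * v j := by
  linear_combination -sub_mul_sum_neighbors hdiag hoff j v - hv j + b * hv0

end TwoValued

theorem even_card_sub_sum {ι : Type*} {v : ι → ℤ} (hv : ∀ x, v x = 1 ∨ v x = -1)
    (s : Finset ι) : Even ((#s : ℤ) - ∑ x ∈ s, v x) := by
  rw [Finset.card_eq_sum_ones, Nat.cast_sum, ← Finset.sum_sub_distrib]
  exact Finset.even_sum _ fun x _ => by rcases hv x with h | h <;> simp [h]

theorem mul_nonpos_of_mul_add_mul_eq {n ℓ a b : ℤ} (h : n * (ℓ + a * b) = (ℓ - a) * (ℓ - b))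
    (hℓ : 0 < ℓ) (hn : ℓ + 2 ≤ n) : a * b ≤ 0 := by
  by_contra! hab
  rcases mul_pos_iff.mp hab with ⟨ha, hb⟩ | ⟨ha, hb⟩
  · nlinarith [mul_pos hℓ (add_pos ha hb)]
  · nlinarith [mul_nonneg hℓ.le (mul_nonneg (by omega : 0 ≤ -a - 1) (by omega : 0 ≤ -b - 1))]

theorem dvd_of_eigen_relations {n ℓ a b k S s lam mu : ℤ} (hab : a ≠ b)
    (hk : (b - a) * k = ℓ + (n - 1) * b) (hS : (b - a) * S = (ℓ - b - n) * s)
    (hs : s = 1 ∨ s = -1) (hpar : Even (k - S))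
    (hlam : (a - b) ^ 2 * lam = n * a + n * b ^ 2 - 2 * (ℓ - b) * (a - b))
    (hmu : (a - b) ^ 2 * mu = n * b + n * b ^ 2) :
    b - a ∣ ℓ - b ∧ b - a ∣ n ∧ 2 * (b - a) ∣ n * (b + 1) ∧ (b - a) ^ 2 ∣ n * b * (b + 1) := by
  have hs2 : s * s = 1 := by rcases hs with rfl | rfl <;> norm_num
  have hr : (b - a) * (S * s) = ℓ - b - n := by
    linear_combination s * hS + (ℓ - b - n) * hs2
  have hpar' : Even (k - S * s) := by
    rcases hs with rfl | rfl
    · simpa using hpar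
    · simpa [Int.even_add, Int.even_sub] using hpar
  have hlm : (b - a) * (lam - mu) = 2 * (ℓ - b) - n :=
    mul_left_cancel₀ (sub_ne_zero.2 hab) (by linear_combination hmu - hlam)
  obtain ⟨t, ht⟩ := hpar'
  exact ⟨⟨lam - mu - S * s, by linear_combination hr - hlm⟩,
    ⟨lam - mu - 2 * (S * s), by linear_combination 2 * hr - hlm⟩,
    ⟨t, by linear_combination hr - hk + (b - a) * ht⟩, ⟨mu, by linear_combination -hmu⟩⟩

theorem params_eq_div {n ℓ k lam mu : ℕ} {a b : ℤ} (hab : a ≠ b)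
    (hk : (b - a) * k = ℓ + (n - 1) * b)
    (hlam : (a - b) ^ 2 * lam = n * a + n * b ^ 2 - 2 * (ℓ - b) * (a - b))
    (hmu : (a - b) ^ 2 * mu = n * b + n * b ^ 2) :
    (k : ℚ) = ((ℓ : ℚ) - b + n * b) / (b - a) ∧
    (lam : ℚ) = (n : ℚ) * b * (b + 1) / (b - a) ^ 2 + (2 * ((ℓ : ℚ) - b) - n) / (b - a) ∧
    (mu : ℚ) = (n : ℚ) * b * (b + 1) / (b - a) ^ 2 := by
  have hba : (b : ℚ) - a ≠ 0 := sub_ne_zero.2 (by exact_mod_cast hab.symm)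
  have hkQ : ((b : ℚ) - a) * k = ℓ + (n - 1) * b := by exact_mod_cast hk
  have hlamQ : ((a : ℚ) - b) ^ 2 * lam = n * a + n * b ^ 2 - 2 * (ℓ - b) * (a - b) := by
    exact_mod_cast hlam
  have hmuQ : ((a : ℚ) - b) ^ 2 * mu = n * b + n * b ^ 2 := by exact_mod_cast hmu
  refine ⟨?_, ?_, ?_⟩ <;> field_simp
  · linear_combination hkQ
  · linear_combination hlamQ
  · linear_combination hmuQ

section AssociatedGraph

variable {n : ℕ} (H : Matrix (Fin n) (Fin n) ℤ) (R : Finset (Fin n)) (a : ℤ)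

theorem kA_eq_card_neighbors (i : Fin n) : kA H R a i = #(neighbors (colDot H R) a i) := by
  simp only [kA, neighbors, ne_comm]

theorem associatedGraphIsSRG_iff {v k lam mu : ℕ} :
    AssociatedGraphIsSRG H R a v k lam mu ↔ n = v ∧
      (∀ i, #(neighbors (colDot H R) a i) = k) ∧
      (∀ i j, i ≠ j → colDot H R i j = a →
        #(neighbors (colDot H R) a i ∩ neighbors (colDot H R) a j) = lam) ∧
      (∀ i j, i ≠ j → colDot H R i j ≠ a →
        #(neighbors (colDot H R) a i ∩ neighbors (colDot H R) a j) = mu) := by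
  simp only [AssociatedGraphIsSRG, neighbors, Finset.filter_and]

end AssociatedGraph

theorem stmt7_general {n ℓ : ℕ} (a b : ℤ) (H : Matrix (Fin n) (Fin n) ℤ)
    (R : Finset (Fin n)) (hRcard : R.card = ℓ) (h1 : 1 < ℓ) (h2 : ℓ < n - 1)
    (hba : b ≠ a)
    (hbshm : IsBSHM H R a b)
    (haAtt : ∃ j k, j ≠ k ∧ colDot H R j k = a)
    (hbAtt : ∃ j k, j ≠ k ∧ colDot H R j k = b)
    (hType1 : ∀ i ∈ R, ∑ j, H i j = 0) :
    (∑ i ∈ Rᶜ, (∑ j, H i j) ^ 2) = (n : ℤ) ^ 2 ∧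
    (n : ℤ) * ((ℓ : ℤ) + a * b) = ((ℓ : ℤ) - a) * ((ℓ : ℤ) - b) ∧
    a * b ≤ 0 ∧
    (b - a) ∣ ((ℓ : ℤ) - b) ∧
    (b - a) ∣ (n : ℤ) ∧
    (2 * (b - a)) ∣ ((n : ℤ) * (b + 1)) ∧
    ((b - a) ^ 2) ∣ ((n : ℤ) * b * (b + 1)) ∧
    (∀ i : Fin n, (kA H R a i : ℚ) =
      ((ℓ : ℚ) - (b : ℚ)) / ((b : ℚ) - (a : ℚ)) +
        (n : ℚ) * (b : ℚ) / ((b : ℚ) - (a : ℚ))) ∧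
    (∃ k lam mu : ℕ, AssociatedGraphIsSRG H R a n k lam mu ∧
      (k : ℚ) = ((ℓ : ℚ) - (b : ℚ) + (n : ℚ) * (b : ℚ)) / ((b : ℚ) - (a : ℚ)) ∧
      (lam : ℚ) = (n : ℚ) * (b : ℚ) * ((b : ℚ) + 1) / ((b : ℚ) - (a : ℚ)) ^ 2 +
        (2 * ((ℓ : ℚ) - (b : ℚ)) - (n : ℚ)) / ((b : ℚ) - (a : ℚ)) ∧
      (mu : ℚ) = (n : ℚ) * (b : ℚ) * ((b : ℚ) + 1) / ((b : ℚ) - (a : ℚ)) ^ 2) := by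
  obtain ⟨⟨hent, hHT⟩, hoff⟩ := hbshm
  have hH := Matrix.mul_eq_smul_one_comm (by simp) hHT
  have hdiag : ∀ i, colDot H R i i = ℓ := fun i => by rw [colDot_self R hent, hRcard]
  have hsum := sum_colDot_eq_zero R hType1
  have hsq := sum_colDot_mul_colDot R hH
  obtain ⟨i₀, hi₀⟩ : R.Nonempty := Finset.card_pos.mp (by omega)
  obtain ⟨ja, ka, hjka, hja⟩ := haAtt
  obtain ⟨jb, kb, hjkb, hjb⟩ := hbAtt
  have hk := sub_mul_card_neighbors hdiag hoff hsum ja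
  have hlam := sq_mul_card_inter_neighbors hdiag hoff hsum hsq (colDot_comm R) hjka
  have hmu := sq_mul_card_inter_neighbors hdiag hoff hsum hsq (colDot_comm R) hjkb
  rw [hja] at hlam
  rw [hjb, sub_self, mul_zero, sub_zero] at hmu
  have hS := sub_mul_sum_neighbors_of_eigenvector hdiag hoff
    (fun j => by simpa [hi₀] using sum_colDot_mul_row R hH j i₀) (hType1 i₀ hi₀) ja
  have hmain := mul_add_mul_eq_sub_mul_sub hdiag hoff hsum hsq ja
  obtain ⟨hd1, hd2, hd3, hd4⟩ := dvd_of_eigen_relations hba.symm hk hS (hent i₀ ja)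
    (even_card_sub_sum (hent i₀) _) hlam hmu
  obtain ⟨hkQ, hlamQ, hmuQ⟩ := params_eq_div hba.symm hk hlam hmu
  refine ⟨sum_compl_sq_sum_row_eq hHT hType1, hmain,
    mul_nonpos_of_mul_add_mul_eq hmain (by omega) (by omega), hd1, hd2, hd3, hd4, fun i => ?_,
    _, _, _, (associatedGraphIsSRG_iff H R a).2 ⟨rfl, fun i => ?_, fun i j hij hija => ?_,
    fun i j hij hija => ?_⟩, hkQ, hlamQ, hmuQ⟩
  · rw [kA_eq_card_neighbors, card_neighbors_eq hba.symm hdiag hoff hsum i ja, ← add_div]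
    exact hkQ
  · exact card_neighbors_eq hba.symm hdiag hoff hsum i ja
  · exact card_inter_neighbors_eq hba.symm hdiag hoff hsum hsq (colDot_comm R) hij hjka
      (hija.trans hja.symm)
  · exact card_inter_neighbors_eq hba.symm hdiag hoff hsum hsq (colDot_comm R) hij hjkb
      (((hoff i j hij).resolve_left hija).trans hjb.symm)

theorem stmt7 {n ℓ : ℕ} (a b : ℤ) (H : Matrix (Fin n) (Fin n) ℤ)
    (R : Finset (Fin n)) (hRcard : R.card = ℓ) (h1 : 1 < ℓ) (h2 : ℓ < n - 1)
    (hba : b ≠ a) (hbna : b ≠ -a)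
    (hbshm : IsBSHM H R a b)
    (haAtt : ∃ j k, j ≠ k ∧ colDot H R j k = a)
    (hbAtt : ∃ j k, j ≠ k ∧ colDot H R j k = b)
    (hType1 : ∀ i ∈ R, ∑ j, H i j = 0) :
    (∑ i ∈ Rᶜ, (∑ j, H i j) ^ 2) = (n : ℤ) ^ 2 ∧
    (n : ℤ) * ((ℓ : ℤ) + a * b) = ((ℓ : ℤ) - a) * ((ℓ : ℤ) - b) ∧
    a * b ≤ 0 ∧
    (b - a) ∣ ((ℓ : ℤ) - b) ∧
    (b - a) ∣ (n : ℤ) ∧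
    (2 * (b - a)) ∣ ((n : ℤ) * (b + 1)) ∧
    ((b - a) ^ 2) ∣ ((n : ℤ) * b * (b + 1)) ∧
    (∀ i : Fin n, (kA H R a i : ℚ) =
      ((ℓ : ℚ) - (b : ℚ)) / ((b : ℚ) - (a : ℚ)) +
        (n : ℚ) * (b : ℚ) / ((b : ℚ) - (a : ℚ))) ∧
    (∃ k lam mu : ℕ, AssociatedGraphIsSRG H R a n k lam mu ∧
      (k : ℚ) = ((ℓ : ℚ) - (b : ℚ) + (n : ℚ) * (b : ℚ)) / ((b : ℚ) - (a : ℚ)) ∧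
      (lam : ℚ) = (n : ℚ) * (b : ℚ) * ((b : ℚ) + 1) / ((b : ℚ) - (a : ℚ)) ^ 2 +
        (2 * ((ℓ : ℚ) - (b : ℚ)) - (n : ℚ)) / ((b : ℚ) - (a : ℚ)) ∧
      (mu : ℚ) = (n : ℚ) * (b : ℚ) * ((b : ℚ) + 1) / ((b : ℚ) - (a : ℚ)) ^ 2) :=
  stmt7_general a b H R hRcard h1 h2 hba hbshm haAtt hbAtt hType1
end
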